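/- Let w0 ∈ k^d, H_{w0} = {γ ∈ SO(J') : γ J' w0 = J' w0}, and R_ℓ = {m(γ) v : γ ∈ H_{w0}, v ∈ V_ℓ}. Then the map R_ℓ → ℂˣ sending m(γ) v to χ_{w0}(v) (for γ ∈ H_{w0} and v ∈ V_ℓ) is well-defined and is a group homomorphism on R_ℓ; in particular it extends χ_{w0} from V_ℓ to the Bessel subgroup R_ℓ, and it is trivial on m(H_{w0}). -/

import Mathlib

open Matrix

noncomputable section

/-- Index type for the 3-block decomposition of size `ℓ + d + ℓ`. -/
abbrev Idx (ℓ d : ℕ) : Type := Fin ℓ ⊕ (Fin d ⊕ Fin ℓ)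

variable {k : Type*} [Field k]

/-- The `n × n` matrix built out of nine blocks of sizes `ℓ, d, ℓ`. -/
def blk3 {ℓ d : ℕ}
    (A : Matrix (Fin ℓ) (Fin ℓ) k) (B : Matrix (Fin ℓ) (Fin d) k) (C : Matrix (Fin ℓ) (Fin ℓ) k)
    (D : Matrix (Fin d) (Fin ℓ) k) (E : Matrix (Fin d) (Fin d) k) (F : Matrix (Fin d) (Fin ℓ) k)
    (G : Matrix (Fin ℓ) (Fin ℓ) k) (H : Matrix (Fin ℓ) (Fin d) k) (I : Matrix (Fin ℓ) (Fin ℓ) k) :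
    Matrix (Idx ℓ d) (Idx ℓ d) k :=
  Matrix.fromBlocks A (Matrix.fromCols B C) (Matrix.fromRows D G) (Matrix.fromBlocks E F H I)

/-- The `ℓ × ℓ` exchange matrix `K` (ones on the antidiagonal). -/
def exK (k : Type*) [Field k] (ℓ : ℕ) : Matrix (Fin ℓ) (Fin ℓ) k :=
  Matrix.of fun i j => if (i : ℕ) + (j : ℕ) = ℓ - 1 then 1 else 0

/-- The symmetric matrix `J = [[0,0,K],[0,J',0],[K,0,0]]`. -/
def Jmat {d : ℕ} (ℓ : ℕ) (J' : Matrix (Fin d) (Fin d) k) : Matrix (Idx ℓ d) (Idx ℓ d) k :=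
  blk3 0 0 (exK k ℓ) 0 J' 0 (exK k ℓ) 0 0

/-- The special orthogonal group of an invertible symmetric matrix `S`:
`SO(S) = {g : gᵀ S g = S, det g = 1}`. -/
def SO {m : Type*} [Fintype m] [DecidableEq m] (S : Matrix m m k) : Set (Matrix m m k) :=
  {g | gᵀ * S * g = S ∧ g.det = 1}

/-- Upper unitriangular matrices (the group `Z_ℓ`). -/
def IsUnitri {ℓ : ℕ} (z : Matrix (Fin ℓ) (Fin ℓ) k) : Prop :=
  (∀ i, z i i = 1) ∧ ∀ i j : Fin ℓ, (j : ℕ) < (i : ℕ) → z i j = 0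

/-- The unipotent subgroup `V_ℓ ⊆ SO(J)`: elements of `SO(J)` of block form
`[[z, y, x], [0, I, y'], [0, 0, w]]` with `z` upper unitriangular. -/
def Vl {d : ℕ} (ℓ : ℕ) (J' : Matrix (Fin d) (Fin d) k) :
    Set (Matrix (Idx ℓ d) (Idx ℓ d) k) :=
  {g | g ∈ SO (Jmat ℓ J') ∧ ∃ z y x y' w, IsUnitri z ∧ g = blk3 z y x 0 1 y' 0 0 w}

/-- The top-left `ℓ × ℓ` block `z` of a matrix. -/
def zBlk {ℓ d : ℕ} (g : Matrix (Idx ℓ d) (Idx ℓ d) k) : Matrix (Fin ℓ) (Fin ℓ) k :=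
  Matrix.of fun i j => g (Sum.inl i) (Sum.inl j)

/-- The top-middle `ℓ × d` block `y` of a matrix. -/
def yBlk {ℓ d : ℕ} (g : Matrix (Idx ℓ d) (Idx ℓ d) k) : Matrix (Fin ℓ) (Fin d) k :=
  Matrix.of fun i j => g (Sum.inl i) (Sum.inr (Sum.inl j))

/-- Sum of the superdiagonal entries `Σ_{i} z_{i, i+1}`. -/
def superdiag {ℓ : ℕ} (z : Matrix (Fin ℓ) (Fin ℓ) k) : k :=
  ∑ i : Fin ℓ, ∑ j : Fin ℓ, if (j : ℕ) = (i : ℕ) + 1 then z i j else 0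

/-- The last row `y_ℓ` of an `ℓ × d` matrix (as a vector in `k^d`). -/
def lastRow {ℓ d : ℕ} (y : Matrix (Fin ℓ) (Fin d) k) : Fin d → k :=
  fun j => ∑ i : Fin ℓ, if (i : ℕ) + 1 = ℓ then y i j else 0

/-- The Bessel character `χ_{w0}(g) = ψ(Σ_i z_{i,i+1} + y_ℓ J' w0)`. -/
def besselChar {ℓ d : ℕ} (ψ : AddChar k ℂˣ) (J' : Matrix (Fin d) (Fin d) k) (w0 : Fin d → k)
    (g : Matrix (Idx ℓ d) (Idx ℓ d) k) : ℂˣ :=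
  ψ (superdiag (zBlk g) + lastRow (yBlk g) ⬝ᵥ J'.mulVec w0)

/-- The block-diagonal embedding `m : γ ↦ blockdiag(I_ℓ, γ, I_ℓ)`. -/
def mEmb {d : ℕ} (ℓ : ℕ) (γ : Matrix (Fin d) (Fin d) k) : Matrix (Idx ℓ d) (Idx ℓ d) k :=
  blk3 1 0 0 0 γ 0 0 0 1

/-- The stabilizer `H_{w0} = {γ ∈ SO(J') : γ J' w0 = J' w0}`. -/
def Hstab {d : ℕ} (J' : Matrix (Fin d) (Fin d) k) (w0 : Fin d → k) :
    Set (Matrix (Fin d) (Fin d) k) :=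
  {γ | γ ∈ SO J' ∧ γ.mulVec (J'.mulVec w0) = J'.mulVec w0}

/-- The Bessel subgroup `R_ℓ = {m(γ) v : γ ∈ H_{w0}, v ∈ V_ℓ}`. -/
def Rl {d : ℕ} (ℓ : ℕ) (J' : Matrix (Fin d) (Fin d) k) (w0 : Fin d → k) :
    Set (Matrix (Idx ℓ d) (Idx ℓ d) k) :=
  {g | ∃ γ ∈ Hstab J' w0, ∃ v ∈ Vl ℓ J', g = mEmb ℓ γ * v}

/-- The superdiagonal of `z`, as a vector in `k^{ℓ-1}`. -/
def sdVec {ℓ : ℕ} (z : Matrix (Fin ℓ) (Fin ℓ) k) : Fin (ℓ - 1) → k :=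
  fun i => z ⟨(i : ℕ), by have := i.isLt; omega⟩ ⟨(i : ℕ) + 1, by have := i.isLt; omega⟩

/-- The projection of `V_ℓ` onto its abelianization `k^{ℓ-1} × k^d`,
`g ↦ ((z_{1,2}, …, z_{ℓ-1,ℓ}), y_ℓ)`. -/
def projVl {ℓ d : ℕ} (g : Matrix (Idx ℓ d) (Idx ℓ d) k) : (Fin (ℓ - 1) → k) × (Fin d → k) :=
  (sdVec (zBlk g), lastRow (yBlk g))

/-!
An element `m(γ) v` of `R_ℓ` is block upper triangular, `[[z, y, x], [0, γ, *], [0, 0, w]]`,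
and `χ_{w0}` reads only the superdiagonal of `z` and the last row of `y`. In a product with
`[[z', y', *], [0, γ', *], [0, 0, *]]` the `z`-blocks multiply, and the superdiagonal of a
product of unitriangular matrices is the sum of the superdiagonals. The `y`-block of the
product is `z y' + y γ'`, whose last row is `y'_ℓ + y_ℓ γ'` because `z` is unitriangular;
paired with `J' w0`, the factor `γ'` drops out since `γ'` fixes `J' w0`.
-/

section BlockMatrices

variable {R : Type*} {ℓ d : ℕ}

lemma blk3_mul [NonUnitalNonAssocSemiring R] (A B C D E F G H I : _)
    (A' B' C' D' E' F' G' H' I' : _) :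
    blk3 (k := R) (ℓ := ℓ) (d := d) A B C D E F G H I * blk3 A' B' C' D' E' F' G' H' I' =
      blk3 (A * A' + B * D' + C * G') (A * B' + B * E' + C * H') (A * C' + B * F' + C * I')
        (D * A' + E * D' + F * G') (D * B' + E * E' + F * H') (D * C' + E * F' + F * I')
        (G * A' + H * D' + I * G') (G * B' + H * E' + I * H') (G * C' + H * F' + I * I') := by
  ext i j
  rcases i with i | i | i <;> rcases j with j | j | j <;>
    simp [blk3, Matrix.mul_apply, Matrix.fromBlocks, Matrix.fromCols, Fintype.sum_sum_type,
      add_assoc]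

@[simp]
lemma zBlk_blk3 (A B C D E F G H I : _) :
    zBlk (blk3 (k := R) (ℓ := ℓ) (d := d) A B C D E F G H I) = A := by
  ext i j
  simp [zBlk, blk3]

@[simp]
lemma yBlk_blk3 (A B C D E F G H I : _) :
    yBlk (blk3 (k := R) (ℓ := ℓ) (d := d) A B C D E F G H I) = B := by
  ext i j
  simp [yBlk, blk3]

lemma mEmb_mul_blk3 (γ : Matrix (Fin d) (Fin d) k) (z y x y' w : _) :
    mEmb ℓ γ * blk3 z y x 0 1 y' 0 0 w = blk3 z y x 0 γ (γ * y') 0 0 w := by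
  simp [mEmb, blk3_mul]

end BlockMatrices

section Unitriangular

variable {ℓ : ℕ}

lemma IsUnitri.mul_apply_of_val_eq_succ {z z' : Matrix (Fin ℓ) (Fin ℓ) k} (hz : IsUnitri z)
    (hz' : IsUnitri z') {i j : Fin ℓ} (hij : (j : ℕ) = i + 1) :
    (z * z') i j = z i j + z' i j := by
  have hne : i ≠ j := fun h => by rw [h] at hij; omega
  rw [Matrix.mul_apply, Fintype.sum_eq_add i j hne, hz.1, hz'.1, one_mul, mul_one, add_comm]
  rintro m ⟨hmi, hmj⟩
  have hmi' : (m : ℕ) ≠ i := Fin.val_ne_of_ne hmi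
  have hmj' : (m : ℕ) ≠ j := Fin.val_ne_of_ne hmj
  rcases Nat.lt_or_gt_of_ne hmi' with hlt | hgt
  · rw [hz.2 i m hlt, zero_mul]
  · rw [hz'.2 m j (by omega), mul_zero]

lemma superdiag_one : superdiag (1 : Matrix (Fin ℓ) (Fin ℓ) k) = 0 := by
  refine Finset.sum_eq_zero fun i _ => Finset.sum_eq_zero fun j _ => ?_
  split_ifs with hij
  · exact Matrix.one_apply_ne fun h => by rw [h] at hij; omega
  · rfl

lemma IsUnitri.superdiag_mul {z z' : Matrix (Fin ℓ) (Fin ℓ) k} (hz : IsUnitri z)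
    (hz' : IsUnitri z') : superdiag (z * z') = superdiag z + superdiag z' := by
  simp only [superdiag, ← Finset.sum_add_distrib]
  refine Finset.sum_congr rfl fun i _ => Finset.sum_congr rfl fun j _ => ?_
  split_ifs with hij
  · exact hz.mul_apply_of_val_eq_succ hz' hij
  · rw [add_zero]

def lastUnitVec (ℓ : ℕ) : Fin ℓ → k :=
  fun i => if (i : ℕ) + 1 = ℓ then 1 else 0

lemma lastRow_eq_vecMul {d : ℕ} (y : Matrix (Fin ℓ) (Fin d) k) :
    lastRow y = lastUnitVec ℓ ᵥ* y := by
  funext j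
  simp [lastRow, lastUnitVec, Matrix.vecMul, dotProduct, ite_mul]

lemma IsUnitri.lastUnitVec_vecMul {z : Matrix (Fin ℓ) (Fin ℓ) k} (hz : IsUnitri z) :
    lastUnitVec ℓ ᵥ* z = lastUnitVec ℓ := by
  funext j
  have hj := j.isLt
  obtain ⟨last, hlast⟩ : ∃ last : Fin ℓ, (last : ℕ) + 1 = ℓ := ⟨⟨ℓ - 1, by omega⟩, by simp; omega⟩
  rw [Matrix.vecMul, dotProduct, Finset.sum_eq_single last]
  · rcases eq_or_ne j last with rfl | hne
    · simp [lastUnitVec, hz.1, hlast]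
    · have hj' : (j : ℕ) < last := by
        have := Fin.val_ne_of_ne hne
        omega
      simp [lastUnitVec, hz.2 last j hj', hlast]
      omega
  · intro i _ hi
    have : (i : ℕ) + 1 ≠ ℓ := fun h => hi (Fin.ext (by omega))
    simp [lastUnitVec, this]
  · simp

end Unitriangular

section BesselCharacter

variable {ℓ d : ℕ} (ψ : AddChar k ℂˣ) (J' : Matrix (Fin d) (Fin d) k) (w0 : Fin d → k)

@[simp]
lemma besselChar_blk3 (z y x D E F G H I : _) :
    besselChar (ℓ := ℓ) ψ J' w0 (blk3 z y x D E F G H I) =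
      ψ (superdiag z + lastRow y ⬝ᵥ J' *ᵥ w0) := by
  simp [besselChar]

lemma besselChar_blk3_mul_blk3 {z z' : Matrix (Fin ℓ) (Fin ℓ) k} {γ γ' : Matrix (Fin d) (Fin d) k}
    (hz : IsUnitri z) (hz' : IsUnitri z') (hγ' : γ' *ᵥ (J' *ᵥ w0) = J' *ᵥ w0)
    (y x u w y' x' u' w' : _) :
    besselChar ψ J' w0 (blk3 z y x 0 γ u 0 0 w * blk3 z' y' x' 0 γ' u' 0 0 w') =
      besselChar ψ J' w0 (blk3 z y x 0 γ u 0 0 w) *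
        besselChar ψ J' w0 (blk3 z' y' x' 0 γ' u' 0 0 w') := by
  have hlast : lastRow (z * y' + y * γ') ⬝ᵥ J' *ᵥ w0
      = lastRow y' ⬝ᵥ J' *ᵥ w0 + lastRow y ⬝ᵥ J' *ᵥ w0 := by
    rw [lastRow_eq_vecMul, Matrix.vecMul_add, ← Matrix.vecMul_vecMul, ← Matrix.vecMul_vecMul,
      hz.lastUnitVec_vecMul, add_dotProduct, ← dotProduct_mulVec _ γ', hγ', ← lastRow_eq_vecMul,
      ← lastRow_eq_vecMul]
  simp only [blk3_mul, Matrix.mul_zero, Matrix.zero_mul, add_zero, besselChar_blk3,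
    hz.superdiag_mul hz', hlast, ← AddChar.map_add_eq_mul]
  congr 1
  ring

end BesselCharacter

theorem besselChar_extends_to_Rl_general {k : Type*} [Field k] {ℓ d : ℕ}
    (J' : Matrix (Fin d) (Fin d) k)
    (ψ : AddChar k ℂˣ) (w0 : Fin d → k) :
    ∃ χe : Matrix (Idx ℓ d) (Idx ℓ d) k → ℂˣ,
      -- well-defined: the value on any product `m(γ) v` is `χ_{w0}(v)`
      (∀ γ ∈ Hstab J' w0, ∀ v ∈ Vl ℓ J', χe (mEmb ℓ γ * v) = besselChar ψ J' w0 v) ∧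
      -- group homomorphism on `R_ℓ`
      (∀ g ∈ Rl ℓ J' w0, ∀ g' ∈ Rl ℓ J' w0, χe (g * g') = χe g * χe g') ∧
      -- extends `χ_{w0}` from `V_ℓ`
      (∀ v ∈ Vl ℓ J', χe v = besselChar ψ J' w0 v) ∧
      -- trivial on `m(H_{w0})`
      (∀ γ ∈ Hstab J' w0, χe (mEmb ℓ γ) = 1) := by
  refine ⟨besselChar ψ J' w0, ?_, ?_, fun _ _ => rfl, ?_⟩
  · rintro γ - _ ⟨-, _, _, _, _, _, -, rfl⟩
    simp [mEmb_mul_blk3]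
  · rintro _ ⟨γ, -, _, ⟨-, _, _, _, _, _, hz, rfl⟩, rfl⟩
      _ ⟨γ', hγ', _, ⟨-, _, _, _, _, _, hz', rfl⟩, rfl⟩
    rw [mEmb_mul_blk3, mEmb_mul_blk3]
    exact besselChar_blk3_mul_blk3 ψ J' w0 hz hz' hγ'.2 _ _ _ _ _ _ _ _
  · intro γ _
    simp [mEmb, superdiag_one, lastRow_eq_vecMul]

/-- the map `R_ℓ → ℂˣ`, `m(γ) v ↦ χ_{w0}(v)` (for `γ ∈ H_{w0}`, `v ∈ V_ℓ`)
is well-defined and a group homomorphism on `R_ℓ`; it extends `χ_{w0}` from `V_ℓ` and is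
trivial on `m(H_{w0})`. -/
theorem besselChar_extends_to_Rl {k : Type*} [Field k] {ℓ d : ℕ} (hl : 0 < ℓ) (hd : 0 < d)
    (J' : Matrix (Fin d) (Fin d) k) (hJ'sym : J'ᵀ = J') (hJ'inv : IsUnit J')
    (ψ : AddChar k ℂˣ) (w0 : Fin d → k) :
    ∃ χe : Matrix (Idx ℓ d) (Idx ℓ d) k → ℂˣ,
      -- well-defined: the value on any product `m(γ) v` is `χ_{w0}(v)`
      (∀ γ ∈ Hstab J' w0, ∀ v ∈ Vl ℓ J', χe (mEmb ℓ γ * v) = besselChar ψ J' w0 v) ∧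
      -- group homomorphism on `R_ℓ`
      (∀ g ∈ Rl ℓ J' w0, ∀ g' ∈ Rl ℓ J' w0, χe (g * g') = χe g * χe g') ∧
      -- extends `χ_{w0}` from `V_ℓ`
      (∀ v ∈ Vl ℓ J', χe v = besselChar ψ J' w0 v) ∧
      -- trivial on `m(H_{w0})`
      (∀ γ ∈ Hstab J' w0, χe (mEmb ℓ γ) = 1) :=
  besselChar_extends_to_Rl_general J' ψ w0
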